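/- For every k ≥ 1, the Fourier partial sum of f at 0 of order q_k − 1 equals a_k · Σ_{m=1}^{p_k} 1/m, while the Fourier partial sum of f at 0 of order q_k + p_k equals 0. In particular, S_{q_k − 1}(f)(0) ≥ a_k ln p_k for all k. -/

import Mathlib

open Finset Real Filter

/-- The trigonometric polynomial `T_{p,q}(x) = Σ_{m=1}^p cos((q−m)x)/m − Σ_{m=1}^p cos((q+m)x)/m`. -/
noncomputable def T (p q : ℕ) (x : ℝ) : ℝ :=
  (∑ m ∈ Finset.Icc 1 p, Real.cos (((q : ℝ) - (m : ℝ)) * x) / (m : ℝ))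
    - ∑ m ∈ Finset.Icc 1 p, Real.cos (((q : ℝ) + (m : ℝ)) * x) / (m : ℝ)

/-- Fourier cosine coefficient `a_n(g) = (1/π) ∫_{-π}^{π} g(t) cos(nt) dt`. -/
noncomputable def fourierA (g : ℝ → ℝ) (n : ℕ) : ℝ :=
  (1 / Real.pi) * ∫ t in (-Real.pi)..Real.pi, g t * Real.cos ((n : ℝ) * t)

/-- Fourier sine coefficient `b_n(g) = (1/π) ∫_{-π}^{π} g(t) sin(nt) dt`. -/
noncomputable def fourierB (g : ℝ → ℝ) (n : ℕ) : ℝ :=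
  (1 / Real.pi) * ∫ t in (-Real.pi)..Real.pi, g t * Real.sin ((n : ℝ) * t)

/-- Fourier partial sum `S_N(g)(x) = a_0(g)/2 + Σ_{n=1}^N (a_n(g) cos(nx) + b_n(g) sin(nx))`. -/
noncomputable def fourierPartialSum (g : ℝ → ℝ) (N : ℕ) (x : ℝ) : ℝ :=
  fourierA g 0 / 2 +
    ∑ n ∈ Finset.Icc 1 N, (fourierA g n * Real.cos ((n : ℝ) * x)
      + fourierB g n * Real.sin ((n : ℝ) * x))

/-! `T_{p,q}` is a cosine polynomial with frequencies `q - m` and `q + m` and coefficients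
`1/m` and `-1/m`, so its Fourier partial sum of order `N` at `0` is the sum of the coefficients
of the frequencies `≤ N`: it vanishes unless `q - p ≤ N < q + p` and equals `∑_{m ≤ p} 1/m`
at `N = q - 1`. By Parseval the `T_{p,q}` are bounded in `L²`, hence in `L¹`, so the Fourier
coefficients of `f` are the `a_k`-weighted sums of those of the blocks, and by the separation
of the blocks only the `k`-th one contributes at the orders `q_k - 1` and `q_k + p_k`.
The lower bound is then `log p ≤ ∑_{m ≤ p} 1/m`. -/

open intervalIntegral
open MeasureTheory (volume)

lemma integral_cos_int_mul (k : ℤ) :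
    ∫ t in (-π)..π, cos (k * t) = if k = 0 then 2 * π else 0 := by
  split_ifs with hk
  · simp [hk, two_mul]
  · rw [integral_comp_mul_left cos (Int.cast_ne_zero.mpr hk), integral_cos, mul_neg, sin_neg,
      sin_int_mul_pi]
    simp

lemma integral_cos_nat_mul_mul_cos_nat_mul {j : ℕ} (hj : j ≠ 0) (n : ℕ) :
    ∫ t in (-π)..π, cos (j * t) * cos (n * t) = if j = n then π else 0 := by
  have h (t : ℝ) : cos (j * t) * cos (n * t)
      = (cos (((j - n : ℤ) : ℝ) * t) + cos (((j + n : ℤ) : ℝ) * t)) / 2 := by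
    push_cast
    rw [sub_mul, add_mul, ← two_mul_cos_mul_cos]
    ring
  have hcont (k : ℤ) : IntervalIntegrable (fun t => cos (k * t)) volume (-π) π :=
    (continuous_cos.comp (continuous_const_mul _)).intervalIntegrable _ _
  simp_rw [h]
  rw [integral_div, integral_add (hcont _) (hcont _), integral_cos_int_mul, integral_cos_int_mul]
  have hjn : (j : ℤ) + n ≠ 0 := by omega
  by_cases hjn' : j = n
  · subst hjn'
    simp [hj]
  · have : (j : ℤ) - n ≠ 0 := by omega
    simp [hjn', this, hjn]

lemma fourierPartialSum_zero (g : ℝ → ℝ) (N : ℕ) :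
    fourierPartialSum g N 0 = fourierA g 0 / 2 + ∑ n ∈ Icc 1 N, fourierA g n := by
  simp [fourierPartialSum]

noncomputable def cosPoly {ι : Type*} (s : Finset ι) (c : ι → ℝ) (ν : ι → ℕ) (t : ℝ) :
    ℝ :=
  ∑ i ∈ s, c i * cos (ν i * t)

section CosPoly

variable {ι : Type*} (s : Finset ι) (c : ι → ℝ) {ν : ι → ℕ}

@[fun_prop]
lemma continuous_cosPoly : Continuous (cosPoly s c ν) := by
  unfold cosPoly; fun_prop

lemma integral_cosPoly_mul_cos (hν : ∀ i ∈ s, ν i ≠ 0) (n : ℕ) :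
    ∫ t in (-π)..π, cosPoly s c ν t * cos (n * t) = π * ∑ i ∈ s with ν i = n, c i := by
  simp_rw [cosPoly, sum_mul, mul_assoc]
  rw [integral_finsetSum fun i _ => (by fun_prop : Continuous _).intervalIntegrable _ _]
  simp_rw [integral_const_mul]
  rw [sum_filter, mul_sum]
  refine sum_congr rfl fun i hi => ?_
  rw [integral_cos_nat_mul_mul_cos_nat_mul (hν i hi)]
  split_ifs <;> ring

lemma fourierA_cosPoly (hν : ∀ i ∈ s, ν i ≠ 0) (n : ℕ) :
    fourierA (cosPoly s c ν) n = ∑ i ∈ s with ν i = n, c i := by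
  rw [fourierA, integral_cosPoly_mul_cos s c hν, ← mul_assoc, one_div_mul_cancel pi_ne_zero,
    one_mul]

lemma integral_cosPoly_sq (hν : ∀ i ∈ s, ν i ≠ 0) (hinj : Set.InjOn ν s) :
    ∫ t in (-π)..π, cosPoly s c ν t ^ 2 = π * ∑ i ∈ s, c i ^ 2 := by
  have hsq (t : ℝ) :
      cosPoly s c ν t ^ 2 = ∑ i ∈ s, c i * (cosPoly s c ν t * cos (ν i * t)) := by
    rw [sq]
    conv_lhs => arg 2; rw [cosPoly]
    rw [mul_sum]
    exact sum_congr rfl fun i _ => by ring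
  have hfiber {i} (hi : i ∈ s) : {j ∈ s | ν j = ν i} = {i} := by
    ext j
    simp only [mem_filter, mem_singleton]
    exact ⟨fun ⟨hj, hji⟩ => hinj hj hi hji, by rintro rfl; exact ⟨hi, rfl⟩⟩
  simp_rw [hsq]
  rw [integral_finsetSum fun i _ => (by fun_prop : Continuous _).intervalIntegrable _ _, mul_sum]
  refine sum_congr rfl fun i hi => ?_
  rw [integral_const_mul, integral_cosPoly_mul_cos s c hν, hfiber hi, sum_singleton]
  ring

lemma fourierPartialSum_cosPoly_zero (hν : ∀ i ∈ s, ν i ≠ 0) (N : ℕ) :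
    fourierPartialSum (cosPoly s c ν) N 0 = ∑ i ∈ s with ν i ≤ N, c i := by
  rw [fourierPartialSum_zero]
  simp_rw [fourierA_cosPoly s c hν]
  have h0 : ∑ i ∈ s with ν i = 0, c i = 0 := by rw [filter_false_of_mem hν, sum_empty]
  rw [h0, zero_div, zero_add,
    ← sum_fiberwise_of_maps_to (g := ν) (t := Icc 1 N) fun i hi => ?_]
  · refine sum_congr rfl fun n hn => ?_
    congr 1
    ext i
    simp only [mem_filter, mem_Icc] at hn ⊢
    exact ⟨fun h => ⟨⟨h.1, h.2 ▸ hn.2⟩, h.2⟩, fun h => ⟨h.1.1, h.2⟩⟩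
  · obtain ⟨hi, hiN⟩ := mem_filter.mp hi
    exact mem_Icc.mpr ⟨Nat.one_le_iff_ne_zero.mpr (hν i hi), hiN⟩

end CosPoly

section T

variable {p q : ℕ}

lemma T_eq_cosPoly (hpq : p < q) :
    T p q = cosPoly ((Icc 1 p).disjSum (Icc 1 p)) (Sum.elim (fun m => 1 / m) fun m => -1 / m)
      (Sum.elim (q - ·) (q + ·)) := by
  ext t
  rw [T, cosPoly, sum_disjSum, sub_eq_add_neg, ← sum_neg_distrib]
  congr 1 <;> refine sum_congr rfl fun m hm => ?_
  · rw [Sum.elim_inl, Sum.elim_inl, Nat.cast_sub (by grind)]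
    ring
  · simp only [Sum.elim_inr, Nat.cast_add]
    ring

lemma T_freq_ne_zero (hpq : p < q) :
    ∀ i ∈ (Icc 1 p).disjSum (Icc 1 p), Sum.elim (q - ·) (q + ·) i ≠ 0 := by
  rintro (m | m) hm <;> simp only [inl_mem_disjSum, inr_mem_disjSum, mem_Icc] at hm <;>
    simp only [Sum.elim_inl, Sum.elim_inr] <;> omega

lemma T_freq_injOn (hpq : p < q) :
    Set.InjOn (Sum.elim (q - ·) (q + ·)) ((Icc 1 p).disjSum (Icc 1 p) : Set (ℕ ⊕ ℕ)) := by
  rintro (m | m) hm (m' | m') hm' h <;>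
    simp only [mem_coe, inl_mem_disjSum, inr_mem_disjSum, mem_Icc, Sum.elim_inl, Sum.elim_inr,
      Sum.inl.injEq, Sum.inr.injEq, reduceCtorEq] at hm hm' h ⊢ <;> omega

@[fun_prop]
lemma continuous_T : Continuous (T p q) := by
  unfold T; fun_prop

lemma fourierPartialSum_T_zero (hpq : p < q) (N : ℕ) :
    fourierPartialSum (T p q) N 0
      = ∑ m ∈ Icc 1 p with q - m ≤ N, 1 / (m : ℝ)
        - ∑ m ∈ Icc 1 p with q + m ≤ N, 1 / (m : ℝ) := by
  rw [T_eq_cosPoly hpq, fourierPartialSum_cosPoly_zero _ _ (T_freq_ne_zero hpq), sum_filter,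
    sum_disjSum, sum_filter, sum_filter, sub_eq_add_neg, ← sum_neg_distrib]
  congr 1
  exact sum_congr rfl fun m _ => by split_ifs <;> simp_all [neg_div]

lemma fourierPartialSum_T_zero_of_lt (hpq : p < q) {N : ℕ} (hN : N < q - p) :
    fourierPartialSum (T p q) N 0 = 0 := by
  rw [fourierPartialSum_T_zero hpq, filter_false_of_mem, filter_false_of_mem, sub_self] <;>
    intro m hm <;> grind

lemma fourierPartialSum_T_zero_of_le (hpq : p < q) {N : ℕ} (hN : q + p ≤ N) :
    fourierPartialSum (T p q) N 0 = 0 := by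
  rw [fourierPartialSum_T_zero hpq, filter_true_of_mem, filter_true_of_mem, sub_self] <;>
    intro m hm <;> grind

lemma fourierPartialSum_T_zero_pred (hpq : p < q) :
    fourierPartialSum (T p q) (q - 1) 0 = ∑ m ∈ Icc 1 p, 1 / (m : ℝ) := by
  rw [fourierPartialSum_T_zero hpq, filter_true_of_mem, filter_false_of_mem, sum_empty,
    sub_zero] <;>
    intro m hm <;> grind

lemma integral_T_sq_le (hpq : p < q) : ∫ t in (-π)..π, T p q t ^ 2 ≤ 4 * π := by
  rw [T_eq_cosPoly hpq, integral_cosPoly_sq _ _ (T_freq_ne_zero hpq) (T_freq_injOn hpq),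
    sum_disjSum]
  have hIcc : Icc 1 p = Ioo 0 (p + 1) := by ext; simp only [mem_Icc, mem_Ioo]; omega
  have h := sum_Ioo_inv_sq_le (α := ℝ) 0 (p + 1)
  rw [← hIcc] at h
  simp only [Sum.elim_inl, Sum.elim_inr, neg_div, neg_sq, one_div, inv_pow]
  norm_num at h
  nlinarith [pi_pos]

lemma integral_abs_T_le (hpq : p < q) : ∫ t in (-π)..π, |T p q t| ≤ 3 * π := by
  have hamgm (x : ℝ) : |x| ≤ (1 + x ^ 2) / 2 := by nlinarith [sq_nonneg (|x| - 1), sq_abs x]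
  calc ∫ t in (-π)..π, |T p q t| ≤ ∫ t in (-π)..π, (1 + T p q t ^ 2) / 2 :=
        integral_mono_on (by linarith [pi_pos]) (continuous_T.abs.intervalIntegrable _ _)
          ((by fun_prop : Continuous _).intervalIntegrable _ _) fun t _ => hamgm _
    _ = (2 * π + ∫ t in (-π)..π, T p q t ^ 2) / 2 := by
        rw [integral_div, integral_add (f := fun _ => (1 : ℝ)) (g := fun t => T p q t ^ 2)
          intervalIntegrable_const ((continuous_T.pow 2).intervalIntegrable _ _), integral_const,
          smul_eq_mul, mul_one]
        ring
    _ ≤ 3 * π := by linarith [integral_T_sq_le hpq]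

end T

lemma hasSum_fourierA_tsum {ι : Type*} [Countable ι] {a : ι → ℝ} {g : ι → ℝ → ℝ}
    (ha : Summable a) (hg : ∀ k, Continuous (g k)) {C : ℝ}
    (hC : ∀ k, ∫ t in (-π)..π, |g k t| ≤ C) (n : ℕ) :
    HasSum (fun k => a k * fourierA (g k) n) (fourierA (fun x => ∑' k, a k * g k x) n) := by
  have hle : -π ≤ π := by linarith [pi_pos]
  set μ := volume.restrict (Set.Ioc (-π) π)
  have hint k : MeasureTheory.Integrable (fun t => a k * (g k t * cos (n * t))) μ :=
    (by fun_prop : Continuous _).integrableOn_Ioc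
  have hnorm_le k : ∫ t, ‖a k * (g k t * cos (n * t))‖ ∂μ ≤ |a k| * C := by
    calc ∫ t, ‖a k * (g k t * cos (n * t))‖ ∂μ ≤ ∫ t, |a k| * |g k t| ∂μ := by
          refine MeasureTheory.integral_mono (hint k).norm
            (by fun_prop : Continuous _).integrableOn_Ioc fun t => ?_
          rw [norm_mul, norm_mul, Real.norm_eq_abs, Real.norm_eq_abs, Real.norm_eq_abs]
          exact mul_le_mul_of_nonneg_left
            (mul_le_of_le_one_right (abs_nonneg _) (abs_cos_le_one _)) (abs_nonneg _)
      _ ≤ |a k| * C := by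
          rw [MeasureTheory.integral_const_mul, ← integral_of_le hle]
          exact mul_le_mul_of_nonneg_left (hC k) (abs_nonneg _)
  have hnorm : Summable fun k => ∫ t, ‖a k * (g k t * cos (n * t))‖ ∂μ :=
    .of_nonneg_of_le (fun k => MeasureTheory.integral_nonneg fun _ => norm_nonneg _) hnorm_le
      (ha.abs.mul_right C)
  have h := (MeasureTheory.hasSum_integral_of_summable_integral_norm hint hnorm).mul_left (1 / π)
  have hterm : (fun k => 1 / π * ∫ t, a k * (g k t * cos (n * t)) ∂μ)
      = fun k => a k * fourierA (g k) n := by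
    ext k
    rw [fourierA, MeasureTheory.integral_const_mul, ← integral_of_le hle, mul_left_comm]
  have hlim : 1 / π * ∫ t, ∑' k, a k * (g k t * cos (n * t)) ∂μ
      = fourierA (fun x => ∑' k, a k * g k x) n := by
    simp_rw [fourierA, integral_of_le hle, ← tsum_mul_right, mul_assoc]
    rfl
  rwa [hterm, hlim] at h

lemma hasSum_fourierPartialSum_tsum_zero {ι : Type*} [Countable ι] {a : ι → ℝ}
    {g : ι → ℝ → ℝ} (ha : Summable a) (hg : ∀ k, Continuous (g k)) {C : ℝ}
    (hC : ∀ k, ∫ t in (-π)..π, |g k t| ≤ C) (N : ℕ) :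
    HasSum (fun k => a k * fourierPartialSum (g k) N 0)
      (fourierPartialSum (fun x => ∑' k, a k * g k x) N 0) := by
  simp_rw [fourierPartialSum_zero, mul_add, mul_sum, mul_div_assoc']
  exact ((hasSum_fourierA_tsum ha hg hC 0).div_const 2).add
    (hasSum_sum fun n _ => hasSum_fourierA_tsum ha hg hC n)

lemma log_le_sum_Icc_one_div (n : ℕ) : log n ≤ ∑ m ∈ Icc 1 n, 1 / (m : ℝ) := by
  simpa [Nat.floor_natCast, harmonic_eq_sum_Icc] using log_le_harmonic_floor n n.cast_nonneg

section Blocks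

variable {p q : ℕ → ℕ}

lemma add_lt_sub_of_lt (hsep : ∀ k, q k + p k < q (k + 1) - p (k + 1)) {j k : ℕ} (hjk : j < k) :
    q j + p j < q k - p k := by
  induction hjk with
  | refl => exact hsep j
  | @step m _ ih =>
    show _ < q (m + 1) - p (m + 1)
    have := hsep m
    omega

lemma fourierPartialSum_T_zero_eq_zero_of_ne (hpq : ∀ k, p k < q k)
    (hsep : ∀ k, q k + p k < q (k + 1) - p (k + 1)) {k k₀ N : ℕ} (hk : k ≠ k₀)
    (hN₁ : q k₀ - p k₀ ≤ N) (hN₂ : N ≤ q k₀ + p k₀) :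
    fourierPartialSum (T (p k) (q k)) N 0 = 0 := by
  rcases hk.lt_or_gt with h | h
  · have := add_lt_sub_of_lt hsep h
    exact fourierPartialSum_T_zero_of_le (hpq k) (by omega)
  · have := add_lt_sub_of_lt hsep h
    exact fourierPartialSum_T_zero_of_lt (hpq k) (by omega)

lemma fourierPartialSum_tsum_T_zero {a : ℕ → ℝ} (ha : Summable a) (hpq : ∀ k, p k < q k)
    (hsep : ∀ k, q k + p k < q (k + 1) - p (k + 1)) {k₀ N : ℕ}
    (hN₁ : q k₀ - p k₀ ≤ N) (hN₂ : N ≤ q k₀ + p k₀) :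
    fourierPartialSum (fun x => ∑' k, a k * T (p k) (q k) x) N 0
      = a k₀ * fourierPartialSum (T (p k₀) (q k₀)) N 0 := by
  refine (hasSum_fourierPartialSum_tsum_zero ha (fun _ => continuous_T)
    (fun k => integral_abs_T_le (hpq k)) N).unique (hasSum_single k₀ fun k hk => ?_)
  rw [fourierPartialSum_T_zero_eq_zero_of_ne hpq hsep hk hN₁ hN₂, mul_zero]

end Blocks

theorem stmt_11_general (p q : ℕ → ℕ) (a : ℕ → ℝ)
    (hpq : ∀ k, 1 < p k ∧ p k < q k)
    (hsep : ∀ k, q k + p k < q (k + 1) - p (k + 1))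
    (hapos : ∀ k, 0 < a k)
    (hsum : Summable a)
    (f : ℝ → ℝ) (hf : ∀ x, f x = ∑' k, a k * T (p k) (q k) x) :
    ∀ k : ℕ,
      fourierPartialSum f (q k - 1) 0 = a k * ∑ m ∈ Finset.Icc 1 (p k), (1 : ℝ) / (m : ℝ)
      ∧ fourierPartialSum f (q k + p k) 0 = 0
      ∧ a k * Real.log (p k) ≤ fourierPartialSum f (q k - 1) 0 := by
  intro k
  obtain rfl : f = fun x => ∑' k, a k * T (p k) (q k) x := funext hf
  have hpq' k : p k < q k := (hpq k).2
  obtain ⟨hp, hq⟩ := hpq k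
  have hpred : fourierPartialSum (fun x => ∑' k, a k * T (p k) (q k) x) (q k - 1) 0
      = a k * ∑ m ∈ Icc 1 (p k), 1 / (m : ℝ) := by
    rw [fourierPartialSum_tsum_T_zero hsum hpq' hsep (k₀ := k) (by omega) (by omega),
      fourierPartialSum_T_zero_pred hq]
  refine ⟨hpred, ?_, ?_⟩
  · rw [fourierPartialSum_tsum_T_zero hsum hpq' hsep (k₀ := k) (by omega) le_rfl,
      fourierPartialSum_T_zero_of_le hq le_rfl, mul_zero]
  · rw [hpred]
    exact mul_le_mul_of_nonneg_left (log_le_sum_Icc_one_div _) (hapos k).le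

/-- For every `k`, `S_{q_k−1}(f)(0) = a_k Σ_{m=1}^{p_k} 1/m` and `S_{q_k+p_k}(f)(0) = 0`;
in particular `S_{q_k−1}(f)(0) ≥ a_k ln p_k`. -/
theorem stmt_11 (p q : ℕ → ℕ) (a : ℕ → ℝ)
    (hpq : ∀ k, 1 < p k ∧ p k < q k)
    (hsep : ∀ k, q k + p k < q (k + 1) - p (k + 1))
    (hapos : ∀ k, 0 < a k)
    (hsum : Summable a)
    (hliminf : 0 < Filter.liminf (fun k => a k * Real.log (p k)) Filter.atTop)
    (f : ℝ → ℝ) (hf : ∀ x, f x = ∑' k, a k * T (p k) (q k) x) :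
    ∀ k : ℕ,
      fourierPartialSum f (q k - 1) 0 = a k * ∑ m ∈ Finset.Icc 1 (p k), (1 : ℝ) / (m : ℝ)
      ∧ fourierPartialSum f (q k + p k) 0 = 0
      ∧ a k * Real.log (p k) ≤ fourierPartialSum f (q k - 1) 0 :=
  stmt_11_general p q a hpq hsep hapos hsum f hf
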